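/- arXiv:2210.15839 — 3 statements merged into one kernel-verified Lean document; each statement's English description precedes it below -/
import Mathlib

section
/- Greedy approximation guarantee: let V be a finite set and g : 2^V → ℝ≥0 a monotone non-decreasing submodular function with g(∅) = 0. For a cardinality budget k, let S_greedy be the set produced by the greedy algorithm that at each of k steps adds the element with the largest marginal gain. Then g(S_greedy) ≥ (1 − (1 − 1/k)^k) · max{g(S) : |S| = k} ≥ (1 − 1/e) · max{g(S) : |S| = k}. -/
/-- Telescoping bound: the gain of adding a whole set is at most the sum of
individual marginal gains, for submodular monotone `g`. -/
lemma submodular_union_bound {V : Type*} [DecidableEq V]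
    (g : Finset V → ℝ)
    (hmono : ∀ S T : Finset V, S ⊆ T → g S ≤ g T)
    (hsub : ∀ (S T : Finset V) (u : V), S ⊆ T → u ∉ T →
      g (insert u T) - g T ≤ g (insert u S) - g S)
    (B : Finset V) (A : Finset V) :
    g (B ∪ A) - g B ≤ ∑ v ∈ A, (g (insert v B) - g B) := by
  induction A using Finset.induction_on with
  | empty => simp
  | @insert a A ha ih =>
    rw [Finset.sum_insert ha]
    have h1 : B ∪ insert a A = insert a (B ∪ A) := by
      ext x; simp [or_comm, or_assoc, or_left_comm]
    rw [h1]
    by_cases hmem : a ∈ B ∪ A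
    · rw [Finset.insert_eq_self.mpr hmem]
      have h2 : 0 ≤ g (insert a B) - g B :=
        sub_nonneg.mpr (hmono _ _ (Finset.subset_insert a B))
      linarith
    · have h3 := hsub B (B ∪ A) a Finset.subset_union_left hmem
      linarith

/-- greedy (1 − 1/e) approximation guarantee for monotone submodular
maximization under a cardinality constraint. -/
theorem greedy_submodular_guarantee {V : Type*} [Fintype V] [DecidableEq V]
    (g : Finset V → ℝ) (hg0 : g ∅ = 0) (hgnn : ∀ S, 0 ≤ g S)
    (hmono : ∀ S T : Finset V, S ⊆ T → g S ≤ g T)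
    (hsub : ∀ (S T : Finset V) (u : V), S ⊆ T → u ∉ T →
      g (insert u T) - g T ≤ g (insert u S) - g S)
    (k : ℕ) (hk : 0 < k) (S : ℕ → Finset V) (u : ℕ → V)
    (hS0 : S 0 = ∅)
    (hstep : ∀ t < k, S (t + 1) = insert (u t) (S t))
    (hgreedy : ∀ t < k, ∀ v : V, g (insert v (S t)) - g (S t) ≤
      g (insert (u t) (S t)) - g (S t))
    (T : Finset V) (hT : T.card = k) :
    (1 - (1 - 1 / (k : ℝ)) ^ k) * g T ≤ g (S k) ∧
      (1 - 1 / Real.exp 1) * g T ≤ g (S k) := by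
  have hkR : (0 : ℝ) < k := by exact_mod_cast hk
  have hkne : (k : ℝ) ≠ 0 := ne_of_gt hkR
  have hq0 : (0 : ℝ) ≤ 1 - 1 / (k : ℝ) := by
    rw [sub_nonneg, div_le_one hkR]
    exact_mod_cast hk
  -- key recursive bound
  have key : ∀ t < k, g T - g (S (t + 1)) ≤ (1 - 1 / (k : ℝ)) * (g T - g (S t)) := by
    intro t ht
    set δ := g (S (t + 1)) - g (S t) with hδ
    have hgap : g T - g (S t) ≤ (k : ℝ) * δ := by
      have h1 : g T ≤ g (S t ∪ T) := hmono _ _ Finset.subset_union_right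
      have h2 := submodular_union_bound g hmono hsub (S t) T
      have h3 : ∑ v ∈ T, (g (insert v (S t)) - g (S t)) ≤ (k : ℝ) * δ := by
        calc ∑ v ∈ T, (g (insert v (S t)) - g (S t))
            ≤ ∑ _v ∈ T, δ := by
              apply Finset.sum_le_sum
              intro v _
              rw [hδ, hstep t ht]
              exact hgreedy t ht v
          _ = (k : ℝ) * δ := by rw [Finset.sum_const, hT, nsmul_eq_mul]
      linarith
    have : δ ≥ (g T - g (S t)) / k := by
      rw [ge_iff_le, div_le_iff₀ hkR]
      linarith [hgap]
    have hexp : g T - g (S (t + 1)) = (g T - g (S t)) - δ := by ring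
    have hk1 : (1 - 1 / (k : ℝ)) = ((k : ℝ) - 1) / k := by field_simp
    rw [hexp, hk1, div_mul_eq_mul_div, le_div_iff₀ hkR]
    nlinarith [hgap]
  -- induction: gap at step t ≤ (1-1/k)^t * g T
  have main : ∀ t ≤ k, g T - g (S t) ≤ (1 - 1 / (k : ℝ)) ^ t * g T := by
    intro t
    induction t with
    | zero => intro _; simp [hS0, hg0]
    | succ n ih =>
      intro hn
      have hnk : n < k := hn
      have h1 := key n hnk
      have h2 := ih (le_of_lt hnk)
      calc g T - g (S (n + 1)) ≤ (1 - 1 / (k : ℝ)) * (g T - g (S n)) := h1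
        _ ≤ (1 - 1 / (k : ℝ)) * ((1 - 1 / (k : ℝ)) ^ n * g T) := by
            exact mul_le_mul_of_nonneg_left h2 hq0
        _ = (1 - 1 / (k : ℝ)) ^ (n + 1) * g T := by ring
  have hfinal := main k le_rfl
  have h1 : (1 - (1 - 1 / (k : ℝ)) ^ k) * g T ≤ g (S k) := by nlinarith [hfinal]
  refine ⟨h1, ?_⟩
  -- (1 - 1/k)^k ≤ 1/e
  have hexp : (1 - 1 / (k : ℝ)) ^ k ≤ 1 / Real.exp 1 := by
    have h2 : 1 - 1 / (k : ℝ) ≤ Real.exp (-(1 / k)) := by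
      have := Real.add_one_le_exp (-(1 / (k : ℝ)))
      linarith
    calc (1 - 1 / (k : ℝ)) ^ k ≤ (Real.exp (-(1 / k))) ^ k :=
          pow_le_pow_left₀ hq0 h2 k
      _ = Real.exp (-(1 / k) * k) := by rw [← Real.exp_nat_mul]; ring_nf
      _ = Real.exp (-1) := by
          congr 1
          field_simp
      _ = 1 / Real.exp 1 := by rw [Real.exp_neg]; ring
  have hTnn := hgnn T
  have : (1 - 1 / Real.exp 1) * g T ≤ (1 - (1 - 1 / (k : ℝ)) ^ k) * g T := by
    apply mul_le_mul_of_nonneg_right _ hTnn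
    linarith
  linarith
end

section
/- Effective resistance is monotone under adding edges (Rayleigh monotonicity, finite matrix form): if L₁ and L₂ are Laplacians of connected graphs on the same vertex set with L₂ = L₁ + w·(e_a − e_b)(e_a − e_b)ᵀ for some w > 0 (adding an edge), then for all vertices i, j, the resistance distance under L₂ is at most that under L₁: (e_i−e_j)ᵀL₂⁺(e_i−e_j) ≤ (e_i−e_j)ᵀL₁⁺(e_i−e_j). -/
/-!
Put `x = e_i - e_j`, `y = L₂⁺ x` and `z = L₁⁺ x`. As `x ⊥ 𝟙` and `𝟙` spans both kernels, the Penrose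
equations give `L₂ y = L₁ z = x`. Adding the edge raises the quadratic form, so
`xᵀ y = yᵀ L₂ y ≥ yᵀ L₁ y`, and then
`0 ≤ (z - y)ᵀ L₁ (z - y) = xᵀ z - 2 xᵀ y + yᵀ L₁ y ≤ xᵀ z - xᵀ y`.
-/

open Matrix

namespace Matrix

variable {ι R : Type*} [Fintype ι]

theorem IsSymm.dotProduct_mulVec_comm [CommSemiring R] {A : Matrix ι ι R} (hA : A.IsSymm)
    (v w : ι → R) : v ⬝ᵥ A *ᵥ w = A *ᵥ v ⬝ᵥ w := by
  rw [dotProduct_mulVec, ← mulVec_transpose, hA.eq]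

/-- `L Lp` is the orthogonal projection onto the range of `L`, which is `(ker L)ᗮ`. -/
theorem mulVec_mulVec_eq_self_of_orthogonal_ker [CommRing R] [LinearOrder R]
    [IsStrictOrderedRing R] {L Lp : Matrix ι ι R} (hL : L.IsSymm) (h₁ : L * Lp * L = L)
    (h₃ : (L * Lp).IsSymm) {x : ι → R} (hx : ∀ v, L *ᵥ v = 0 → x ⬝ᵥ v = 0) :
    L *ᵥ (Lp *ᵥ x) = x := by
  have hproj : L * (L * Lp) = L := by
    simpa only [transpose_mul, h₃.eq, hL.eq] using congrArg transpose h₁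
  set v := x - L *ᵥ (Lp *ᵥ x)
  have hv : L *ᵥ v = 0 := by
    rw [mulVec_sub, mulVec_mulVec x L Lp, mulVec_mulVec, hproj, sub_self]
  have hvv : v ⬝ᵥ v = 0 := by
    rw [sub_dotProduct, ← hL.dotProduct_mulVec_comm, hx v hv, hv,
      dotProduct_zero, sub_zero]
  exact (sub_eq_zero.mp (dotProduct_self_eq_zero.mp hvv)).symm

theorem dotProduct_add_smul_vecMulVec_self_mulVec [CommRing R] (L : Matrix ι ι R) (w : R)
    (u v : ι → R) :
    v ⬝ᵥ (L + w • vecMulVec u u) *ᵥ v = v ⬝ᵥ L *ᵥ v + w * (u ⬝ᵥ v) ^ 2 := by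
  rw [add_mulVec, dotProduct_add, smul_mulVec, vecMulVec_mulVec, dotProduct_smul,
    op_smul_eq_smul, dotProduct_smul, dotProduct_comm v u]
  simp only [smul_eq_mul]
  ring

/-- Thomson's principle in matrix form. -/
theorem PosSemidef.dotProduct_le_of_mulVec_eq {L₁ L₂ : Matrix ι ι ℝ} (h₁ : L₁.PosSemidef)
    (hle : ∀ v, v ⬝ᵥ L₁ *ᵥ v ≤ v ⬝ᵥ L₂ *ᵥ v) {x y z : ι → ℝ} (hy : L₂ *ᵥ y = x)
    (hz : L₁ *ᵥ z = x) : x ⬝ᵥ y ≤ x ⬝ᵥ z := by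
  have hsymm : L₁.IsSymm := isHermitian_iff_isSymm.mp h₁.1
  have hpos : 0 ≤ (z - y) ⬝ᵥ L₁ *ᵥ (z - y) := by
    simpa using h₁.dotProduct_mulVec_nonneg (z - y)
  have hexpand : (z - y) ⬝ᵥ L₁ *ᵥ (z - y) = x ⬝ᵥ z - 2 * (x ⬝ᵥ y) + y ⬝ᵥ L₁ *ᵥ y := by
    rw [mulVec_sub, dotProduct_sub, sub_dotProduct, sub_dotProduct, hz,
      hsymm.dotProduct_mulVec_comm z y, hz, dotProduct_comm z, dotProduct_comm y]
    ring
  have henergy : y ⬝ᵥ L₂ *ᵥ y = x ⬝ᵥ y := by rw [hy, dotProduct_comm]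
  linarith [hle y]

end Matrix

theorem rayleigh_monotonicity_general {n : ℕ} (L₁ L₂ Lp₁ Lp₂ : Matrix (Fin n) (Fin n) ℝ)
    (hL₁ : L₁.PosSemidef) (hL₂ : L₂.PosSemidef)
    (hker₁ : ∀ x : Fin n → ℝ, L₁.mulVec x = 0 ↔ ∃ c : ℝ, x = fun _ => c)
    (hker₂ : ∀ x : Fin n → ℝ, L₂.mulVec x = 0 ↔ ∃ c : ℝ, x = fun _ => c)
    (w : ℝ) (hw : 0 < w) (a b : Fin n)
    (hL : L₂ = L₁ + w • vecMulVec (Pi.single a 1 - Pi.single b 1)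
      (Pi.single a 1 - Pi.single b 1))
    (h11 : L₁ * Lp₁ * L₁ = L₁)
    (h13 : (L₁ * Lp₁).IsSymm)
    (h21 : L₂ * Lp₂ * L₂ = L₂)
    (h23 : (L₂ * Lp₂).IsSymm)
    (i j : Fin n) :
    (Pi.single i 1 - Pi.single j 1) ⬝ᵥ Lp₂.mulVec (Pi.single i 1 - Pi.single j 1) ≤
      (Pi.single i 1 - Pi.single j 1) ⬝ᵥ Lp₁.mulVec (Pi.single i 1 - Pi.single j 1) := by
  set x : Fin n → ℝ := Pi.single i 1 - Pi.single j 1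
  have hx_ker : ∀ L : Matrix (Fin n) (Fin n) ℝ,
      (∀ v, L *ᵥ v = 0 ↔ ∃ c : ℝ, v = fun _ => c) → ∀ v, L *ᵥ v = 0 → x ⬝ᵥ v = 0 := by
    rintro L hker v hv
    obtain ⟨c, rfl⟩ := (hker v).mp hv
    simp [x, sub_dotProduct]
  refine hL₁.dotProduct_le_of_mulVec_eq (fun v => ?_)
    (mulVec_mulVec_eq_self_of_orthogonal_ker (isHermitian_iff_isSymm.mp hL₂.1) h21 h23
      (hx_ker L₂ hker₂))
    (mulVec_mulVec_eq_self_of_orthogonal_ker (isHermitian_iff_isSymm.mp hL₁.1) h11 h13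
      (hx_ker L₁ hker₁))
  rw [hL, dotProduct_add_smul_vecMulVec_self_mulVec]
  exact le_add_of_nonneg_right (by positivity)

/-- Rayleigh monotonicity: adding an edge (a rank-one term
w(e_a−e_b)(e_a−e_b)ᵀ with w > 0) to a connected graph Laplacian can only decrease
every effective resistance. -/
theorem rayleigh_monotonicity {n : ℕ} (L₁ L₂ Lp₁ Lp₂ : Matrix (Fin n) (Fin n) ℝ)
    (hL₁ : L₁.PosSemidef) (hL₂ : L₂.PosSemidef)
    (hker₁ : ∀ x : Fin n → ℝ, L₁.mulVec x = 0 ↔ ∃ c : ℝ, x = fun _ => c)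
    (hker₂ : ∀ x : Fin n → ℝ, L₂.mulVec x = 0 ↔ ∃ c : ℝ, x = fun _ => c)
    (w : ℝ) (hw : 0 < w) (a b : Fin n)
    (hL : L₂ = L₁ + w • vecMulVec (Pi.single a 1 - Pi.single b 1)
      (Pi.single a 1 - Pi.single b 1))
    (h11 : L₁ * Lp₁ * L₁ = L₁) (h12 : Lp₁ * L₁ * Lp₁ = Lp₁)
    (h13 : (L₁ * Lp₁).IsSymm) (h14 : (Lp₁ * L₁).IsSymm)
    (h21 : L₂ * Lp₂ * L₂ = L₂) (h22 : Lp₂ * L₂ * Lp₂ = Lp₂)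
    (h23 : (L₂ * Lp₂).IsSymm) (h24 : (Lp₂ * L₂).IsSymm)
    (i j : Fin n) :
    (Pi.single i 1 - Pi.single j 1) ⬝ᵥ Lp₂.mulVec (Pi.single i 1 - Pi.single j 1) ≤
      (Pi.single i 1 - Pi.single j 1) ⬝ᵥ Lp₁.mulVec (Pi.single i 1 - Pi.single j 1) :=
  rayleigh_monotonicity_general L₁ L₂ Lp₁ Lp₂ hL₁ hL₂ hker₁ hker₂ w hw a b hL h11 h13 h21 h23 i j
end

section
/- The sum of all pairwise resistance distances (Kirchhoff index identity): for a connected graph Laplacian L on n vertices with eigenvalues 0 = λ₁ < λ₂ ≤ … ≤ λₙ, Σ_{i<j} R(i,j) = n · Σ_{k=2}^{n} 1/λₖ = n · Tr(L⁺). -/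
open Matrix

/-- Uniqueness of the Moore–Penrose pseudoinverse. -/
private theorem kirchhoff_mp_unique {n : ℕ} (L A B : Matrix (Fin n) (Fin n) ℝ)
    (hA1 : L * A * L = L) (hA2 : A * L * A = A) (hA3 : (L * A).IsSymm) (hA4 : (A * L).IsSymm)
    (hB1 : L * B * L = L) (hB3 : (L * B).IsSymm) (hB4 : (B * L).IsSymm)
    (hB2 : B * L * B = B) :
    A = B := by
  have hAL : A * L = B * L := by
    calc A * L = (A * L)ᵀ := hA4.symm
    _ = Lᵀ * Aᵀ := by rw [transpose_mul]
    _ = (L * B * L)ᵀ * Aᵀ := by rw [hB1]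
    _ = (Lᵀ * Bᵀ) * (Lᵀ * Aᵀ) := by rw [transpose_mul, transpose_mul]; noncomm_ring
    _ = (B * L)ᵀ * (A * L)ᵀ := by rw [transpose_mul, transpose_mul]
    _ = (B * L) * (A * L) := by rw [hB4, hA4]
    _ = B * (L * A * L) := by noncomm_ring
    _ = B * L := by rw [hA1]
  have hLA : L * A = L * B := by
    calc L * A = (L * A)ᵀ := hA3.symm
    _ = Aᵀ * Lᵀ := by rw [transpose_mul]
    _ = Aᵀ * (L * B * L)ᵀ := by rw [hB1]
    _ = (Aᵀ * Lᵀ) * (Bᵀ * Lᵀ) := by rw [transpose_mul, transpose_mul]; noncomm_ring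
    _ = (L * A)ᵀ * (L * B)ᵀ := by rw [transpose_mul, transpose_mul]
    _ = (L * A) * (L * B) := by rw [hA3, hB3]
    _ = (L * A * L) * B := by noncomm_ring
    _ = L * B := by rw [hA1]
  calc A = A * L * A := hA2.symm
  _ = A * (L * B) := by rw [← hLA]; noncomm_ring
  _ = (B * L) * B := by rw [← hAL]; noncomm_ring
  _ = B := hB2

/-- Kirchhoff index identity: for a connected graph Laplacian L with
eigenvalues λ₁ = 0 < λ₂ ≤ … ≤ λₙ, the sum of all pairwise resistance distances equals
n·Σ_{λₖ ≠ 0} 1/λₖ = n·Tr(L⁺).  (In Lean, 1/0 = 0, so the sum of reciprocals over all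
eigenvalues equals the sum over the nonzero ones.) -/
theorem kirchhoff_index {n : ℕ} (L Lp : Matrix (Fin n) (Fin n) ℝ)
    (hherm : L.IsHermitian) (hL : L.PosSemidef)
    (hker : ∀ x : Fin n → ℝ, L.mulVec x = 0 ↔ ∃ c : ℝ, x = fun _ => c)
    (h1 : L * Lp * L = L) (h2 : Lp * L * Lp = Lp)
    (h3 : (L * Lp).IsSymm) (h4 : (Lp * L).IsSymm) :
    (∑ i : Fin n, ∑ j ∈ Finset.univ.filter (fun j => i < j),
        (Pi.single i 1 - Pi.single j 1) ⬝ᵥ Lp.mulVec (Pi.single i 1 - Pi.single j 1)) =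
        (n : ℝ) * ∑ k : Fin n, 1 / hherm.eigenvalues k ∧
      (∑ i : Fin n, ∑ j ∈ Finset.univ.filter (fun j => i < j),
        (Pi.single i 1 - Pi.single j 1) ⬝ᵥ Lp.mulVec (Pi.single i 1 - Pi.single j 1)) =
        (n : ℝ) * Lp.trace := by
  -- spectral data
  set U : Matrix (Fin n) (Fin n) ℝ := (hherm.eigenvectorUnitary : Matrix (Fin n) (Fin n) ℝ)
    with hU
  have hUU : star U * U = 1 := Unitary.coe_star_mul_self hherm.eigenvectorUnitary
  have hUU' : U * star U = 1 := Unitary.coe_mul_star_self hherm.eigenvectorUnitary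
  set d : Fin n → ℝ := hherm.eigenvalues with hd
  have hspec : L = U * diagonal d * star U := by simpa using hherm.spectral_theorem
  set M : Matrix (Fin n) (Fin n) ℝ := U * diagonal (fun k => (d k)⁻¹) * star U with hM
  have hstarT : ∀ X : Matrix (Fin n) (Fin n) ℝ, star X = Xᵀ := fun X => rfl
  have hddd : diagonal d * diagonal (fun k => (d k)⁻¹) * diagonal d = diagonal d := by
    rw [diagonal_mul_diagonal, diagonal_mul_diagonal]
    congr 1
    funext k
    by_cases h : d k = 0 <;> field_simp [h]
  have hd'dd' : diagonal (fun k => (d k)⁻¹) * diagonal d * diagonal (fun k => (d k)⁻¹)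
      = diagonal (fun k => (d k)⁻¹) := by
    rw [diagonal_mul_diagonal, diagonal_mul_diagonal]
    congr 1
    funext k
    by_cases h : d k = 0 <;> field_simp [h]
  have key : ∀ X Y : Matrix (Fin n) (Fin n) ℝ,
      (U * X * star U) * (U * Y * star U) = U * (X * Y) * star U := by
    intro X Y
    calc (U * X * star U) * (U * Y * star U) = U * X * (star U * U) * Y * star U := by
          noncomm_ring
    _ = U * (X * Y) * star U := by rw [hUU]; noncomm_ring
  -- M satisfies the Penrose conditions
  have hB1 : L * M * L = L := by
    rw [hspec, hM, key, key, hddd]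
  have hB2 : M * L * M = M := by
    rw [hspec, hM, key, key, hd'dd']
  have hsymmconj : ∀ X : Matrix (Fin n) (Fin n) ℝ, X.IsSymm → (U * X * star U).IsSymm := by
    intro X hX
    unfold Matrix.IsSymm
    rw [transpose_mul, transpose_mul, hstarT, transpose_transpose, hX.eq, mul_assoc]
  have hB3 : (L * M).IsSymm := by
    rw [hspec, hM, key, diagonal_mul_diagonal]
    exact hsymmconj _ (isSymm_diagonal _)
  have hB4 : (M * L).IsSymm := by
    rw [hspec, hM, key, diagonal_mul_diagonal]
    exact hsymmconj _ (isSymm_diagonal _)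
  -- hence Lp = M
  have hLpM : Lp = M := kirchhoff_mp_unique L Lp M h1 h2 h3 h4 hB1 hB3 hB4 hB2
  -- trace of Lp
  have htr : Lp.trace = ∑ k : Fin n, 1 / d k := by
    rw [hLpM, hM, trace_mul_cycle, hUU, one_mul, trace_diagonal]
    simp [one_div]
  -- L is symmetric
  have hLsymm : Lᵀ = L := by
    have := hherm
    rwa [Matrix.IsHermitian, conjTranspose_eq_transpose_of_trivial] at this
  -- Lp annihilates the all-ones vector
  have hL1 : L.mulVec (fun _ => (1:ℝ)) = 0 := (hker _).mpr ⟨1, rfl⟩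
  have hLp1 : Lp.mulVec (fun _ => (1:ℝ)) = 0 := by
    have hLLp : L * Lp = Lpᵀ * L := by
      calc L * Lp = (L * Lp)ᵀ := h3.symm
      _ = Lpᵀ * Lᵀ := transpose_mul _ _
      _ = Lpᵀ * L := by rw [hLsymm]
    have : Lp = Lp * Lpᵀ * L := by
      calc Lp = Lp * L * Lp := h2.symm
      _ = Lp * (L * Lp) := by noncomm_ring
      _ = Lp * (Lpᵀ * L) := by rw [hLLp]
      _ = Lp * Lpᵀ * L := by noncomm_ring
    rw [this, ← mulVec_mulVec, hL1, mulVec_zero]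
  have hsumLp : ∑ i : Fin n, ∑ j : Fin n, Lp i j = 0 := by
    have := congrFun hLp1
    simp only [mulVec, dotProduct, mul_one, Pi.zero_apply] at this
    calc ∑ i : Fin n, ∑ j : Fin n, Lp i j = ∑ i : Fin n, (0:ℝ) := by
          refine Finset.sum_congr rfl fun i _ => ?_
          simpa using this i
    _ = 0 := by simp
  -- the quadratic form evaluates to the resistance expression
  have hquad : ∀ i j : Fin n,
      (Pi.single i 1 - Pi.single j 1) ⬝ᵥ Lp.mulVec (Pi.single i 1 - Pi.single j 1)
        = Lp i i + Lp j j - Lp i j - Lp j i := by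
    intro i j
    simp [mulVec_sub, sub_dotProduct, dotProduct_sub, mulVec_single, single_dotProduct]
    ring
  set f : Fin n → Fin n → ℝ := fun i j => Lp i i + Lp j j - Lp i j - Lp j i with hf
  have hfsymm : ∀ i j, f i j = f j i := by intro i j; simp [hf]; ring
  have hfull : ∑ i : Fin n, ∑ j : Fin n, f i j = 2 * ((n:ℝ) * Lp.trace) := by
    simp only [hf]
    push_cast
    simp only [Finset.sum_sub_distrib, Finset.sum_add_distrib, Finset.sum_const,
      Finset.card_univ, Fintype.card_fin, nsmul_eq_mul]
    have e3 : (∑ x : Fin n, ∑ y : Fin n, Lp y x) = ∑ x : Fin n, ∑ y : Fin n, Lp x y :=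
      Finset.sum_comm
    rw [e3, hsumLp, ← Finset.mul_sum]
    simp only [Matrix.trace, Matrix.diag]
    ring
  have hhalf : ∑ i : Fin n, ∑ j ∈ Finset.univ.filter (fun j => i < j), f i j
      = (n : ℝ) * Lp.trace := by
    have hsplit : ∀ i : Fin n, ∑ j : Fin n, f i j
        = (∑ j ∈ Finset.univ.filter (fun j => i < j), f i j)
          + ∑ j ∈ Finset.univ.filter (fun j => j < i), f i j := by
      intro i
      rw [← Finset.sum_filter_add_sum_filter_not Finset.univ (fun j => i < j) (f i)]
      congr 1
      have : (Finset.univ.filter (fun j => ¬ i < j))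
          = insert i (Finset.univ.filter (fun j => j < i)) := by
        ext j
        simp only [Finset.mem_filter, Finset.mem_univ, true_and, Finset.mem_insert, not_lt]
        constructor
        · intro h
          rcases lt_or_eq_of_le h with h | h
          · exact Or.inr h
          · exact Or.inl h
        · rintro (rfl | h)
          · exact le_refl _
          · exact le_of_lt h
      rw [this, Finset.sum_insert (by simp)]
      have hfii : f i i = 0 := by simp [hf]
      rw [hfii, zero_add]
    have hswap : ∑ i : Fin n, ∑ j ∈ Finset.univ.filter (fun j => j < i), f i j
        = ∑ i : Fin n, ∑ j ∈ Finset.univ.filter (fun j => i < j), f i j := by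
      rw [Finset.sum_comm' (t' := Finset.univ)
        (s' := fun j => Finset.univ.filter (fun i => j < i)) (by simp)]
      exact Finset.sum_congr rfl fun j _ => Finset.sum_congr rfl fun i _ => hfsymm i j
    have h2s : 2 * (∑ i : Fin n, ∑ j ∈ Finset.univ.filter (fun j => i < j), f i j)
        = 2 * ((n:ℝ) * Lp.trace) := by
      rw [← hfull]
      rw [Finset.sum_congr rfl fun i _ => hsplit i]
      rw [Finset.sum_add_distrib, hswap]
      ring
    linarith
  have hLHS : (∑ i : Fin n, ∑ j ∈ Finset.univ.filter (fun j => i < j),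
      (Pi.single i 1 - Pi.single j 1) ⬝ᵥ Lp.mulVec (Pi.single i 1 - Pi.single j 1))
      = (n : ℝ) * Lp.trace := by
    rw [← hhalf]
    exact Finset.sum_congr rfl fun i _ => Finset.sum_congr rfl fun j _ => hquad i j
  exact ⟨by rw [hLHS, htr], hLHS⟩
end
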